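/- arXiv:1909.06776 — 2 statements merged into one kernel-verified Lean document; each statement's English description precedes it below -/
import Mathlib

section
/- If X₁,...,Xₙ are independent random variables with finite τ_{φ₁}-norms, then τ_{φ₁}(∑ᵢ(Xᵢ - E Xᵢ))² ≤ ∑ᵢ τ_{φ₁}(Xᵢ - E Xᵢ)². -/
open MeasureTheory ProbabilityTheory Real

/-- The condition `ln E exp (t Y) ≤ φ_∞ (K t)` for all `t`, where `φ_∞ (x) = x²/2` for
`|x| ≤ 1` and `+∞` otherwise; equivalently `E exp (t Y) ≤ exp ((K t)²/2)` whenever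
`|K t| ≤ 1` (the condition is vacuous when `|K t| > 1`). -/
def tauCond {Ω : Type*} [MeasurableSpace Ω] (μ : MeasureTheory.Measure Ω) (Y : Ω → ℝ) (K : ℝ) : Prop :=
  ∀ t : ℝ, |K * t| ≤ 1 →
    ∫⁻ ω, ENNReal.ofReal (Real.exp (t * Y ω)) ∂μ ≤ ENNReal.ofReal (Real.exp ((K * t) ^ 2 / 2))

/-- `τ_{φ₁}(Y) = inf {K > 0 : ln E exp (t Y) ≤ φ_∞ (K t) for all t}`. -/
noncomputable def tauNorm {Ω : Type*} [MeasurableSpace Ω] (μ : MeasureTheory.Measure Ω) (Y : Ω → ℝ) : ℝ :=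
  sInf {K : ℝ | 0 < K ∧ tauCond μ Y K}

/-- Monotonicity of `tauCond` in `K`. -/
lemma tauCond_mono {Ω : Type*} [MeasurableSpace Ω] {μ : MeasureTheory.Measure Ω} {Y : Ω → ℝ}
    {K K' : ℝ} (hK : 0 ≤ K) (hKK' : K ≤ K') (h : tauCond μ Y K) : tauCond μ Y K' := by
  intro t ht
  have habs : |K * t| ≤ |K' * t| := by
    rw [abs_mul, abs_mul]
    exact mul_le_mul_of_nonneg_right (by rwa [abs_of_nonneg hK, abs_of_nonneg (hK.trans hKK')])
      (abs_nonneg t)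
  refine (h t (habs.trans ht)).trans (ENNReal.ofReal_le_ofReal (Real.exp_le_exp.2 ?_))
  have h2 : (K * t) ^ 2 ≤ (K' * t) ^ 2 := by
    rw [← sq_abs (K * t), ← sq_abs (K' * t)]
    exact pow_le_pow_left₀ (abs_nonneg _) habs 2
  linarith

/-- `tauCond` for a sum of independent random variables. -/
lemma tauCond_sum {Ω : Type*} [MeasurableSpace Ω] (μ : Measure Ω) [IsProbabilityMeasure μ]
    (n : ℕ) (Y : Fin n → Ω → ℝ) (hY : ∀ i, Measurable (Y i))
    (hindep : iIndepFun Y μ)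
    (L : Fin n → ℝ) (hL : ∀ i, 0 < L i) (h : ∀ i, tauCond μ (Y i) (L i)) :
    tauCond μ (fun ω => ∑ i, Y i ω) (Real.sqrt (∑ i, L i ^ 2)) := by
  intro t ht
  set S := Real.sqrt (∑ i, L i ^ 2) with hS
  have hsum_nonneg : 0 ≤ ∑ i, L i ^ 2 := Finset.sum_nonneg fun i _ => sq_nonneg _
  have hS2 : S ^ 2 = ∑ i, L i ^ 2 := Real.sq_sqrt hsum_nonneg
  have hLS : ∀ i, L i ≤ S := by
    intro i
    have : L i ^ 2 ≤ ∑ j, L j ^ 2 :=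
      Finset.single_le_sum (fun j _ => sq_nonneg (L j)) (Finset.mem_univ i)
    calc L i = Real.sqrt (L i ^ 2) := (Real.sqrt_sq (hL i).le).symm
      _ ≤ S := Real.sqrt_le_sqrt this
  have hti : ∀ i, |L i * t| ≤ 1 := by
    intro i
    refine le_trans ?_ ht
    rw [abs_mul, abs_mul]
    exact mul_le_mul_of_nonneg_right
      (by rw [abs_of_nonneg (hL i).le, abs_of_nonneg (Real.sqrt_nonneg _)]; exact hLS i)
      (abs_nonneg t)
  -- each exp(t * Y i) is integrable
  have hmeas_exp : ∀ i, Measurable fun ω => Real.exp (t * Y i ω) :=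
    fun i => ((hY i).const_mul t).exp
  have hint : ∀ i, Integrable (fun ω => Real.exp (t * Y i ω)) μ := by
    intro i
    refine ⟨(hmeas_exp i).aestronglyMeasurable, ?_⟩
    rw [hasFiniteIntegral_iff_ofReal (Filter.Eventually.of_forall fun ω => (Real.exp_pos _).le)]
    exact lt_of_le_of_lt (h i t (hti i)) ENNReal.ofReal_lt_top
  have hint_sum : Integrable (fun ω => Real.exp (t * (∑ i, Y i) ω)) μ :=
    hindep.integrable_exp_mul_sum hY fun i _ => hint i
  have hfun : (fun ω => ∑ i, Y i ω) = ∑ i, Y i := by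
    ext ω; simp [Finset.sum_apply]
  -- bound each mgf
  have hmgf_le : ∀ i, mgf (Y i) μ t ≤ Real.exp ((L i * t) ^ 2 / 2) := by
    intro i
    have heq : ENNReal.ofReal (mgf (Y i) μ t)
        = ∫⁻ ω, ENNReal.ofReal (Real.exp (t * Y i ω)) ∂μ :=
      ofReal_integral_eq_lintegral_ofReal (hint i)
        (Filter.Eventually.of_forall fun ω => (Real.exp_pos _).le)
    have := (heq ▸ h i t (hti i))
    rwa [ENNReal.ofReal_le_ofReal_iff (Real.exp_pos _).le] at this
  have hmgf_sum : mgf (∑ i, Y i) μ t = ∏ i, mgf (Y i) μ t :=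
    hindep.mgf_sum hY Finset.univ
  have hprod_le : (∏ i, mgf (Y i) μ t) ≤ ∏ i, Real.exp ((L i * t) ^ 2 / 2) :=
    Finset.prod_le_prod (fun i _ => mgf_nonneg) (fun i _ => hmgf_le i)
  have hprod_exp : (∏ i, Real.exp ((L i * t) ^ 2 / 2)) = Real.exp ((S * t) ^ 2 / 2) := by
    rw [← Real.exp_sum]
    congr 1
    simp_rw [mul_pow]
    rw [← Finset.sum_div, ← Finset.sum_mul, hS2]
  calc ∫⁻ ω, ENNReal.ofReal (Real.exp (t * ∑ i, Y i ω)) ∂μ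
      = ENNReal.ofReal (mgf (∑ i, Y i) μ t) := by
        rw [mgf, ofReal_integral_eq_lintegral_ofReal hint_sum
          (Filter.Eventually.of_forall fun ω => (Real.exp_pos _).le)]
        simp [Finset.sum_apply]
    _ ≤ ENNReal.ofReal (Real.exp ((S * t) ^ 2 / 2)) := by
        apply ENNReal.ofReal_le_ofReal
        rw [hmgf_sum]
        exact hprod_le.trans hprod_exp.le

/-- For independent random variables `X₁, …, Xₙ` with finite `τ_{φ₁}`-norms,
`τ_{φ₁}(∑ᵢ (Xᵢ - E Xᵢ))² ≤ ∑ᵢ τ_{φ₁}(Xᵢ - E Xᵢ)²`. -/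
theorem stmt12 {Ω : Type*} [MeasurableSpace Ω] (μ : Measure Ω) [IsProbabilityMeasure μ]
    (n : ℕ) (X : Fin n → Ω → ℝ) (hmeas : ∀ i, Measurable (X i))
    (hint : ∀ i, Integrable (X i) μ)
    (hindep : iIndepFun X μ)
    (hfin : ∀ i, {K : ℝ | 0 < K ∧ tauCond μ (fun ω => X i ω - ∫ x, X i x ∂μ) K}.Nonempty) :
    tauNorm μ (fun ω => ∑ i, (X i ω - ∫ x, X i x ∂μ)) ^ 2 ≤
      ∑ i, tauNorm μ (fun ω => X i ω - ∫ x, X i x ∂μ) ^ 2 := by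
  set Y : Fin n → Ω → ℝ := fun i ω => X i ω - ∫ x, X i x ∂μ with hYdef
  have hYmeas : ∀ i, Measurable (Y i) := fun i => (hmeas i).sub measurable_const
  have hYindep : iIndepFun Y μ :=
    hindep.comp (fun i => fun x => x - ∫ x, X i x ∂μ)
      (fun i => measurable_id.sub measurable_const)
  set K : Fin n → ℝ := fun i => tauNorm μ (Y i) with hKdef
  have hKnonneg : ∀ i, 0 ≤ K i := fun i =>
    Real.sInf_nonneg fun x hx => hx.1.le
  -- key: for every δ > 0, tauNorm μ (∑ Y i) ≤ sqrt (∑ (K i + δ)²) + δ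
  have key : ∀ δ : ℝ, 0 < δ →
      tauNorm μ (fun ω => ∑ i, Y i ω) ≤ Real.sqrt (∑ i, (K i + δ) ^ 2) + δ := by
    intro δ hδ
    choose M hM hMlt using fun i => Real.lt_sInf_add_pos (hfin i) hδ
    have hMpos : ∀ i, 0 < M i := fun i => (hM i).1
    have hMcond : ∀ i, tauCond μ (Y i) (M i) := fun i => (hM i).2
    set L' := Real.sqrt (∑ i, M i ^ 2) with hL'
    have hL'nonneg : 0 ≤ L' := Real.sqrt_nonneg _
    have hcond : tauCond μ (fun ω => ∑ i, Y i ω) L' :=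
      tauCond_sum μ n Y hYmeas hYindep M hMpos hMcond
    have hcond' : tauCond μ (fun ω => ∑ i, Y i ω) (max L' δ) :=
      tauCond_mono hL'nonneg (le_max_left _ _) hcond
    have hmem : max L' δ ∈ {K : ℝ | 0 < K ∧ tauCond μ (fun ω => ∑ i, Y i ω) K} :=
      ⟨lt_of_lt_of_le hδ (le_max_right _ _), hcond'⟩
    have h1 : tauNorm μ (fun ω => ∑ i, Y i ω) ≤ max L' δ := csInf_le ⟨0, fun x hx => hx.1.le⟩ hmem
    have hL'le : L' ≤ Real.sqrt (∑ i, (K i + δ) ^ 2) := by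
      apply Real.sqrt_le_sqrt
      apply Finset.sum_le_sum
      intro i _
      exact pow_le_pow_left₀ (hMpos i).le (hMlt i).le 2
    have hmax : max L' δ ≤ Real.sqrt (∑ i, (K i + δ) ^ 2) + δ := by
      apply max_le
      · linarith
      · linarith [Real.sqrt_nonneg (∑ i, (K i + δ) ^ 2)]
    linarith
  -- take δ → 0
  have hlim : tauNorm μ (fun ω => ∑ i, Y i ω) ≤ Real.sqrt (∑ i, K i ^ 2) := by
    have hcont : Filter.Tendsto (fun δ : ℝ => Real.sqrt (∑ i, (K i + δ) ^ 2) + δ)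
        (nhdsWithin 0 (Set.Ioi 0)) (nhds (Real.sqrt (∑ i, (K i + 0) ^ 2) + 0)) := by
      apply Filter.Tendsto.mono_left _ nhdsWithin_le_nhds
      exact (Continuous.tendsto (by continuity) 0)
    simp only [add_zero] at hcont
    refine ge_of_tendsto hcont ?_
    filter_upwards [self_mem_nhdsWithin] with δ hδ
    exact key δ hδ
  have hTnonneg : 0 ≤ tauNorm μ (fun ω => ∑ i, Y i ω) :=
    Real.sInf_nonneg fun x hx => hx.1.le
  calc tauNorm μ (fun ω => ∑ i, Y i ω) ^ 2
      ≤ Real.sqrt (∑ i, K i ^ 2) ^ 2 := pow_le_pow_left₀ hTnonneg hlim 2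
    _ = ∑ i, K i ^ 2 := Real.sq_sqrt (Finset.sum_nonneg fun i _ => sq_nonneg _)
end

section
/- Let p ≥ 1, δ ≥ 0, x ≥ 0. If |x - 1| ≥ δ then |x^p - 1| ≥ max{δ, δ^p}. -/
open Real

/- Below `1` both `x ↦ x ^ p` and `t ↦ t ^ p` lie under the diagonal; above `1`, superadditivity
of `t ↦ t ^ p` applied to `x = 1 + (x - 1)` gives `(x - 1) ^ p ≤ x ^ p - 1`. -/
theorem Real.max_abs_sub_one_rpow_le_abs_rpow_sub_one {p x : ℝ} (hp : 1 ≤ p) (hx : 0 ≤ x) :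
    max |x - 1| (|x - 1| ^ p) ≤ |x ^ p - 1| := by
  rcases le_total x 1 with hx1 | hx1
  · have hxp : x ^ p ≤ x := rpow_le_self_of_le_one hx hx1 hp
    rw [abs_of_nonpos (by linarith), abs_of_nonpos (by linarith)]
    have hpow : (-(x - 1)) ^ p ≤ -(x - 1) := rpow_le_self_of_le_one (by linarith) (by linarith) hp
    exact max_le (by linarith) (by linarith)
  · have hxp : x ≤ x ^ p := self_le_rpow_of_one_le hx1 hp
    have hsuper : 1 ^ p + (x - 1) ^ p ≤ (1 + (x - 1)) ^ p :=
      add_rpow_le_rpow_add zero_le_one (by linarith) hp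
    rw [one_rpow, add_sub_cancel] at hsuper
    rw [abs_of_nonneg (by linarith), abs_of_nonneg (by linarith)]
    exact max_le (by linarith) (by linarith)

/-- For `p ≥ 1`, `δ ≥ 0`, `x ≥ 0`: if `|x - 1| ≥ δ` then `|x^p - 1| ≥ max {δ, δ^p}`. -/
theorem stmt17 (p δ x : ℝ) (hp : 1 ≤ p) (hδ : 0 ≤ δ) (hx : 0 ≤ x)
    (h : δ ≤ |x - 1|) : max δ (δ ^ p) ≤ |x ^ p - 1| :=
  calc max δ (δ ^ p) ≤ max |x - 1| (|x - 1| ^ p) :=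
        max_le_max h (rpow_le_rpow hδ h (by linarith))
    _ ≤ |x ^ p - 1| := max_abs_sub_one_rpow_le_abs_rpow_sub_one hp hx
end
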